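/- Let t ∈ ℂ, t ≠ 0, and A = diag(t,…,t,0) ∈ M_n(ℂ) (n−1 entries equal to t, one equal to 0). Then for B ∈ M_n(ℂ), the differential σ_{*,A}(B) = 0 (i.e. (d/dh)σ_j(A+hB)|_{h=0} = 0 for all 1 ≤ j ≤ n) if and only if tr B = 0 and b_{nn} = 0. -/

import Mathlib

/-!
Up to sign, the derivatives at `h = 0` of `σ_1(A + hB), …, σ_n(A + hB)` are the coefficients of
the polynomial `P` multiplying `h` in `det (X - A - hB)`. In the permutation expansion of this
determinant every off-diagonal entry is a multiple of `h` and every nontrivial permutation moves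
at least two indices, so only the diagonal term contributes: for `A = diag(λ)`,
`P = -∑ᵢ bᵢᵢ ∏_{j ≠ i} (X - λⱼ)`. For `λ = (t, …, t, 0)` this is
`-(X - t)^(n-2) (tr B · X - t · bₙₙ)`, of degree `< n`, so it vanishes iff `tr B = 0 = bₙₙ`.
-/

/-- `sigma j M`: the `j`-th elementary symmetric function of the eigenvalues of `M`. -/
noncomputable def sigma {n : ℕ} (j : ℕ) (M : Matrix (Fin n) (Fin n) ℂ) : ℂ :=
  (-1 : ℂ) ^ j * M.charpoly.coeff (n - j)

open Polynomial Matrix Finset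

lemma deriv_coeff_eval_C {𝕜 : Type*} [NontriviallyNormedField 𝕜] (p : 𝕜[X][X]) (k : ℕ) :
    deriv (fun h : 𝕜 => (p.eval (C h)).coeff k) 0 = (p.coeff 1).coeff k := by
  set q : 𝕜[X] := ∑ m ∈ range (p.natDegree + 2), C ((p.coeff m).coeff k) * X ^ m
  have hq : (fun h : 𝕜 => (p.eval (C h)).coeff k) = fun h => q.eval h := by
    ext h
    rw [eval_eq_sum_range' (Nat.lt_add_of_pos_right two_pos)]
    simp only [q, finsetSum_coeff, eval_finsetSum, ← C_pow, coeff_mul_C, eval_mul, eval_C,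
      eval_pow, eval_X]
  rw [hq, Polynomial.deriv, ← coeff_zero_eq_eval_zero, coeff_derivative]
  simp [q, finsetSum_coeff]

lemma coeff_one_prod_C_add_X_mul_C {R ι : Type*} [CommRing R] [DecidableEq ι] (s : Finset ι)
    (d e : ι → R) :
    (∏ i ∈ s, (C (d i) + X * C (e i))).coeff 1 = ∑ i ∈ s, (∏ j ∈ s.erase i, d j) * e i := by
  have coeff_one_eq (p : R[X]) : p.coeff 1 = (derivative p).eval 0 := by
    simp [← coeff_zero_eq_eval_zero, coeff_derivative]
  simp [coeff_one_eq, derivative_prod_finset, eval_finsetSum, eval_prod]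

lemma eq_zero_iff_coeff_sub_eq_zero {R : Type*} [Semiring R] {n : ℕ} {Q : R[X]}
    (hQ : Q.natDegree < n) : Q = 0 ↔ ∀ j, 1 ≤ j → j ≤ n → Q.coeff (n - j) = 0 := by
  refine ⟨fun h j _ _ => by simp [h], fun h => Polynomial.ext fun k => ?_⟩
  rcases lt_or_ge k n with hk | hk
  · simpa [Nat.sub_sub_self hk.le] using h (n - k) (by omega) (Nat.sub_le n k)
  · exact coeff_eq_zero_of_natDegree_lt (hQ.trans_le hk)

section Field

variable {K : Type*} [Field K]

lemma natDegree_X_sub_C_pow_mul_le (t a c : K) (m : ℕ) :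
    ((X - C t) ^ m * (C a * X - C c)).natDegree ≤ m + 1 := by
  compute_degree

lemma X_sub_C_pow_mul_eq_zero_iff {t : K} (ht : t ≠ 0) (m : ℕ) (a b : K) :
    (X - C t) ^ m * (C a * X - C (t * b)) = 0 ↔ a = 0 ∧ b = 0 := by
  rw [mul_eq_zero, or_iff_right (pow_ne_zero _ (X_sub_C_ne_zero t))]
  constructor
  · intro h
    exact ⟨by simpa using congrArg (coeff · 1) h, by simpa [ht] using congrArg (coeff · 0) h⟩
  · rintro ⟨rfl, rfl⟩
    simp

end Field

section CommRing

variable {R : Type*} [CommRing R] {ι : Type*} [Fintype ι] [DecidableEq ι]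

lemma sum_prod_erase_X_sub_C_mul_C (hι : 2 ≤ Fintype.card ι) (i₀ : ι) (t : R) (e : ι → R) :
    ∑ i, (∏ j ∈ univ.erase i, (X - C (if j = i₀ then 0 else t))) * C (e i) =
      (X - C t) ^ (Fintype.card ι - 2) * (C (∑ i, e i) * X - C (t * e i₀)) := by
  have prod_erase_self : ∏ j ∈ univ.erase i₀, (X - C (if j = i₀ then 0 else t)) =
      (X - C t) ^ (Fintype.card ι - 2) * (X - C t) := by
    rw [prod_congr rfl fun j hj => by rw [if_neg (ne_of_mem_erase hj)], prod_const,
      card_erase_of_mem (mem_univ _), card_univ, ← pow_succ]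
    congr 1
    omega
  have prod_erase_of_ne {i : ι} (hi : i ≠ i₀) :
      ∏ j ∈ univ.erase i, (X - C (if j = i₀ then 0 else t)) =
        (X - C t) ^ (Fintype.card ι - 2) * X := by
    have hi₀ : i₀ ∈ univ.erase i := mem_erase.mpr ⟨hi.symm, mem_univ _⟩
    rw [← mul_prod_erase _ _ hi₀, if_pos rfl, map_zero, sub_zero,
      prod_congr rfl fun j hj => by rw [if_neg (ne_of_mem_erase hj)], prod_const,
      card_erase_of_mem hi₀, card_erase_of_mem (mem_univ _), card_univ, mul_comm]
    rfl
  rw [← add_sum_erase _ _ (mem_univ i₀), prod_erase_self,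
    sum_congr rfl fun i hi => by rw [prod_erase_of_ne (ne_of_mem_erase hi)],
    ← add_sum_erase _ _ (mem_univ i₀), ← mul_sum, map_add, ← map_sum]
  simp only [map_mul]
  ring

/- In `R[X][X]` the outer variable is the parameter `h` of the pencil `A + h • B`, the inner one
is the variable of the characteristic polynomial. -/
lemma charpoly_add_smul_eq_eval_det (A B : Matrix ι ι R) (r : R) :
    (A + r • B).charpoly =
      ((charmatrix A).map C - (X : R[X][X]) • B.map (C ∘ C)).det.eval (C r) := by
  rw [charpoly, ← coe_evalRingHom, RingHom.map_det]
  congr 1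
  refine Matrix.ext fun i j => ?_
  by_cases hij : i = j
  · subst hij
    simp [charmatrix_apply_eq]
    ring
  · simp [charmatrix_apply_ne _ _ _ hij]
    ring

lemma X_sq_dvd_prod_perm_apply {M : Matrix ι ι R[X]} (hM : ∀ i j, i ≠ j → X ∣ M i j)
    {σ : Equiv.Perm ι} (hσ : σ ≠ 1) : X ^ 2 ∣ ∏ i, M (σ i) i := calc
  X ^ 2 ∣ X ^ #σ.support := pow_dvd_pow X (Equiv.Perm.two_le_card_support_of_ne_one hσ)
  _ = ∏ _ ∈ σ.support, X := (prod_const X).symm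
  _ ∣ ∏ i ∈ σ.support, M (σ i) i :=
    prod_dvd_prod_of_dvd _ _ fun _ hi => hM _ _ (Equiv.Perm.mem_support.mp hi)
  _ ∣ ∏ i, M (σ i) i := prod_dvd_prod_of_subset _ _ _ (subset_univ _)

lemma coeff_one_det_diagonal_add_X_smul (d : ι → R) (E : Matrix ι ι R) :
    (diagonal (fun i => C (d i)) + (X : R[X]) • E.map C).det.coeff 1 =
      ∑ i, (∏ j ∈ univ.erase i, d j) * E i i := by
  rw [det_apply, finsetSum_coeff, sum_eq_single 1]
  · simpa using coeff_one_prod_C_add_X_mul_C univ d fun i => E i i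
  · intro σ _ hσ
    have off_diag_dvd (i j : ι) (hij : i ≠ j) :
        X ∣ (diagonal (fun i => C (d i)) + (X : R[X]) • E.map C) i j := by
      simp [diagonal_apply_ne _ hij]
    rw [coeff_smul, X_pow_dvd_iff.mp (X_sq_dvd_prod_perm_apply off_diag_dvd hσ) 1 one_lt_two,
      smul_zero]
  · simp

lemma coeff_one_det_charmatrix_diagonal_sub_X_smul (d : ι → R) (B : Matrix ι ι R) :
    ((charmatrix (diagonal d)).map C - (X : R[X][X]) • B.map (C ∘ C)).det.coeff 1 =
      -∑ i, (∏ j ∈ univ.erase i, (X - C (d j))) * C (B i i) := by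
  have hM : (charmatrix (diagonal d)).map C - (X : R[X][X]) • B.map (C ∘ C) =
      diagonal (fun i => C (X - C (d i))) + (X : R[X][X]) • (-B.map C).map C := by
    rw [charmatrix_diagonal, diagonal_map (map_zero _), sub_eq_add_neg,
      Matrix.map_neg _ (map_neg C), smul_neg]
    rfl
  rw [hM, coeff_one_det_diagonal_add_X_smul]
  simp

end CommRing

lemma deriv_sigma_add_smul {n : ℕ} (j : ℕ) (A B : Matrix (Fin n) (Fin n) ℂ) :
    deriv (fun h : ℂ => sigma j (A + h • B)) 0 =
      (-1) ^ j * (((charmatrix A).map C - (X : ℂ[X][X]) • B.map (C ∘ C)).det.coeff 1).coeff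
        (n - j) := by
  simp_rw [sigma, charpoly_add_smul_eq_eval_det, deriv_const_mul_field', deriv_coeff_eval_C]

theorem ker_diff_sigma_at_diag_tt0 (n : ℕ) (hn : 2 ≤ n) (t : ℂ) (ht : t ≠ 0)
    (A : Matrix (Fin n) (Fin n) ℂ)
    (hA : A = Matrix.diagonal (fun j : Fin n => if (j : ℕ) = n - 1 then 0 else t))
    (B : Matrix (Fin n) (Fin n) ℂ) :
    (∀ j : ℕ, 1 ≤ j → j ≤ n → deriv (fun h : ℂ => sigma j (A + h • B)) 0 = 0) ↔
      Matrix.trace B = 0 ∧ B ⟨n - 1, by omega⟩ ⟨n - 1, by omega⟩ = 0 := by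
  set last : Fin n := ⟨n - 1, by omega⟩
  have hA_last : A = diagonal fun j => if j = last then 0 else t := by
    simp [hA, last, Fin.ext_iff]
  simp_rw [hA_last, deriv_sigma_add_smul, coeff_one_det_charmatrix_diagonal_sub_X_smul,
    sum_prod_erase_X_sub_C_mul_C (ι := Fin n) (by simpa using hn)]
  simp only [Fintype.card_fin, coeff_neg, neg_eq_zero, mul_eq_zero, pow_eq_zero_iff', one_ne_zero,
    false_and, false_or]
  rw [← eq_zero_iff_coeff_sub_eq_zero
      ((natDegree_X_sub_C_pow_mul_le _ _ _ _).trans_lt (by omega)),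
    X_sub_C_pow_mul_eq_zero_iff ht]
  rfl
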